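/- Assume Newman's inequality: for all natural numbers N ≥ 1, (0.05·3^α)·N^α ≤ Δ₃([0, N)) ≤ (5·3^α)·N^α, where α = ln 3 / ln 4. Then for every even natural number n ≥ 2, Δ^{odd}_{3,1}(n) ≥ 0.05·(1.5)^α·n^α; in particular Δ^{odd}_{3,1}(n) > 0. -/
import Mathlib


/-- `s2 m` is the number of 1's in the binary expansion of `m` (binary digit sum). -/
def s2 (m : ℕ) : ℕ := (Nat.digits 2 m).sum

/-- A natural number is *odious* if the number of 1's in its binary expansion is odd. -/
def Odious (m : ℕ) : Prop := Odd (s2 m)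

/-- A natural number is *evil* if the number of 1's in its binary expansion is even. -/
def Evil (m : ℕ) : Prop := Even (s2 m)

instance : DecidablePred Odious := fun m => inferInstanceAs (Decidable (Odd (s2 m)))
instance : DecidablePred Evil := fun m => inferInstanceAs (Decidable (Even (s2 m)))

/-- `muOdious n` = μ⁰(n): the number of odd odious integers in `[0, n)`. -/
def muOdious (n : ℕ) : ℕ := ((Finset.range n).filter (fun m => Odd m ∧ Odious m)).card

/-- `muEvil n` = μᵉ(n): the number of odd evil integers in `[0, n)`. -/
def muEvil (n : ℕ) : ℕ := ((Finset.range n).filter (fun m => Odd m ∧ Evil m)).card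

/-- `deltaOdd3 i n` = Δ^{odd}_{3,i}(n): the number of odd odious integers `m ∈ [0, n)` with
`m ≡ i (mod 3)` minus the number of odd evil integers `m ∈ [0, n)` with `m ≡ i (mod 3)`. -/
def deltaOdd3 (i n : ℕ) : ℤ :=
  (((Finset.range n).filter (fun m => Odd m ∧ m % 3 = i ∧ Odious m)).card : ℤ) -
  (((Finset.range n).filter (fun m => Odd m ∧ m % 3 = i ∧ Evil m)).card : ℤ)

/-- `delta3 N` = Δ₃([0, N)): the number of evil multiples of 3 in `[0, N)` minus the number of
odious multiples of 3 in `[0, N)`. -/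
def delta3 (N : ℕ) : ℤ :=
  (((Finset.range N).filter (fun m => 3 ∣ m ∧ Evil m)).card : ℤ) -
  (((Finset.range N).filter (fun m => 3 ∣ m ∧ Odious m)).card : ℤ)

/-- `deltaOdd3All n` = Δ^{odd}₃([0, n)): the number of odd evil multiples of 3 in `[0, n)`
minus the number of odd odious multiples of 3 in `[0, n)`. -/
def deltaOdd3All (n : ℕ) : ℤ :=
  (((Finset.range n).filter (fun m => Odd m ∧ 3 ∣ m ∧ Evil m)).card : ℤ) -
  (((Finset.range n).filter (fun m => Odd m ∧ 3 ∣ m ∧ Odious m)).card : ℤ)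

lemma s2_two_mul_add_one (m : ℕ) : s2 (2 * m + 1) = s2 m + 1 := by
  unfold s2
  rw [Nat.digits_def' (by norm_num : (1:ℕ) < 2) (by omega)]
  have h1 : (2 * m + 1) % 2 = 1 := by omega
  have h2 : (2 * m + 1) / 2 = m := by omega
  rw [h1, h2]
  simp [Nat.add_comm]

lemma odious_two_mul_add_one (m : ℕ) : Odious (2 * m + 1) ↔ Evil m := by
  unfold Odious Evil
  rw [s2_two_mul_add_one]
  simp [Nat.odd_add_one, Nat.not_odd_iff_even]

lemma evil_two_mul_add_one (m : ℕ) : Evil (2 * m + 1) ↔ Odious m := by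
  unfold Odious Evil
  rw [s2_two_mul_add_one]
  simp [Nat.even_add_one, Nat.not_even_iff_odd]

lemma card_key (k : ℕ) (P : ℕ → Prop) [DecidablePred P]
    (hP : ∀ m, P (2 * m + 1) ↔ ¬ P m) :
    ((Finset.range (2 * k)).filter (fun m => Odd m ∧ m % 3 = 1 ∧ P m)).card
    = ((Finset.range k).filter (fun m => 3 ∣ m ∧ ¬ P m)).card := by
  refine Finset.card_bij' (fun m _ => m / 2) (fun m _ => 2 * m + 1) ?hi ?hj ?li ?ri
  case hi =>
    intro a ha
    simp only [Finset.mem_filter, Finset.mem_range] at ha ⊢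
    obtain ⟨hlt, hodd, hmod, hp⟩ := ha
    obtain ⟨j, hj⟩ := hodd
    subst hj
    have hj2 : (2 * j + 1) / 2 = j := by omega
    rw [hj2]
    refine ⟨by omega, by omega, ?_⟩
    rw [← hP]; exact hp
  case hj =>
    intro a ha
    simp only [Finset.mem_filter, Finset.mem_range] at ha ⊢
    obtain ⟨hlt, hdvd, hp⟩ := ha
    obtain ⟨j, hj⟩ := hdvd
    refine ⟨by omega, ⟨a, by ring⟩, by omega, ?_⟩
    rw [hP]; exact hp
  case li =>
    intro a ha
    simp only [Finset.mem_filter, Finset.mem_range] at ha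
    obtain ⟨_, hodd, _, _⟩ := ha
    obtain ⟨j, hj⟩ := hodd
    show 2 * (a / 2) + 1 = a
    omega
  case ri =>
    intro a _
    show (2 * a + 1) / 2 = a
    omega

lemma card_oddmod1_odious (k : ℕ) :
    ((Finset.range (2 * k)).filter (fun m => Odd m ∧ m % 3 = 1 ∧ Odious m)).card
    = ((Finset.range k).filter (fun m => 3 ∣ m ∧ Evil m)).card := by
  rw [card_key k Odious (fun m => by
    rw [odious_two_mul_add_one]; unfold Odious Evil; exact Nat.not_odd_iff_even.symm)]
  congr 1
  apply Finset.filter_congr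
  intro m _
  simp [Odious, Evil, Nat.not_odd_iff_even]

lemma card_oddmod1_evil (k : ℕ) :
    ((Finset.range (2 * k)).filter (fun m => Odd m ∧ m % 3 = 1 ∧ Evil m)).card
    = ((Finset.range k).filter (fun m => 3 ∣ m ∧ Odious m)).card := by
  rw [card_key k Evil (fun m => by
    rw [evil_two_mul_add_one]; unfold Odious Evil; exact Nat.not_even_iff_odd.symm)]
  congr 1
  apply Finset.filter_congr
  intro m _
  simp [Odious, Evil, Nat.not_even_iff_odd]

lemma deltaOdd3_one_eq_delta3 (k : ℕ) : deltaOdd3 1 (2 * k) = delta3 k := by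
  unfold deltaOdd3 delta3
  rw [card_oddmod1_odious, card_oddmod1_evil]

/-- Assuming Newman's inequality `(0.05·3^α)·N^α ≤ Δ₃([0,N)) ≤ (5·3^α)·N^α` for all `N ≥ 1`,
where `α = ln 3 / ln 4`, for every even natural number `n ≥ 2` we have
`Δ^{odd}_{3,1}(n) ≥ 0.05·(1.5)^α·n^α`; in particular `Δ^{odd}_{3,1}(n) > 0`. -/
theorem deltaOdd3_one_lower_bound
    (hNewman : ∀ N : ℕ, 1 ≤ N →
      0.05 * (3 : ℝ) ^ (Real.log 3 / Real.log 4) * (N : ℝ) ^ (Real.log 3 / Real.log 4) ≤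
        (delta3 N : ℝ) ∧
      (delta3 N : ℝ) ≤
        5 * (3 : ℝ) ^ (Real.log 3 / Real.log 4) * (N : ℝ) ^ (Real.log 3 / Real.log 4))
    (n : ℕ) (hn : Even n) (hn2 : 2 ≤ n) :
    0.05 * (1.5 : ℝ) ^ (Real.log 3 / Real.log 4) * (n : ℝ) ^ (Real.log 3 / Real.log 4) ≤
      (deltaOdd3 1 n : ℝ) ∧ 0 < deltaOdd3 1 n := by
  set α := Real.log 3 / Real.log 4 with hα
  obtain ⟨k, hk⟩ := hn
  have hkn : n = 2 * k := by omega
  have h1k : 1 ≤ k := by omega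
  have heq : deltaOdd3 1 n = delta3 k := by rw [hkn]; exact deltaOdd3_one_eq_delta3 k
  have hN := (hNewman k h1k).1
  have hcast : (n : ℝ) = 2 * (k : ℝ) := by rw [hkn]; push_cast; ring
  have hprod : 0.05 * (1.5 : ℝ) ^ α * (n : ℝ) ^ α = 0.05 * (3 : ℝ) ^ α * (k : ℝ) ^ α := by
    rw [hcast, Real.mul_rpow (by norm_num) (Nat.cast_nonneg k)]
    have h32 : (1.5 : ℝ) ^ α * (2 : ℝ) ^ α = (3 : ℝ) ^ α := by
      rw [← Real.mul_rpow (by norm_num) (by norm_num)]; norm_num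
    calc 0.05 * (1.5 : ℝ) ^ α * ((2 : ℝ) ^ α * (k : ℝ) ^ α)
        = 0.05 * ((1.5 : ℝ) ^ α * (2 : ℝ) ^ α) * (k : ℝ) ^ α := by ring
      _ = 0.05 * (3 : ℝ) ^ α * (k : ℝ) ^ α := by rw [h32]
  have hmain : 0.05 * (1.5 : ℝ) ^ α * (n : ℝ) ^ α ≤ (deltaOdd3 1 n : ℝ) := by
    rw [heq, hprod]; exact hN
  refine ⟨hmain, ?_⟩
  have hn0 : (0 : ℝ) < (n : ℝ) := by exact_mod_cast Nat.lt_of_lt_of_le (by norm_num) hn2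
  have hpos : (0 : ℝ) < 0.05 * (1.5 : ℝ) ^ α * (n : ℝ) ^ α := by positivity
  have : (0 : ℝ) < (deltaOdd3 1 n : ℝ) := lt_of_lt_of_le hpos hmain
  exact_mod_cast this
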